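/- arXiv:1808.06930 — 11 statements merged into one kernel-verified Lean document; each statement's English description precedes it below -/
import Mathlib

section
/- Let q = 3^(2m+1) and θ = 3^m. For every nonzero t ∈ F_q, the kernel of the additive homomorphism ς_t(s) = t·s^(3θ) − t^(3θ)·s is exactly the three-element set {0, t, −t}. -/
/-!
Dividing by `t`, the kernel consists of the `t • u` with `u ^ (3θ) = u`. Since `(3θ)² = 3q`,
applying `u ↦ u ^ (3θ)` twice gives `u = u ^ (3q) = u ^ 3`, so `u ∈ 𝔽₃ = {0, 1, -1}`;
conversely every element of `𝔽₃` is fixed by all powers of Frobenius.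
-/

theorem pow_pow_eq_self {M : Type*} [Monoid M] {u : M} {n : ℕ} (h : u ^ n = u) (k : ℕ) :
    u ^ n ^ k = u := by
  induction k with
  | zero => rw [pow_zero, pow_one]
  | succ k ih => rw [pow_succ, pow_mul, ih, h]

theorem FiniteField.pow_pow_succ_eq_self_iff {K : Type*} [Field K] [Finite K] {p m : ℕ}
    (hK : Nat.card K = p ^ (2 * m + 1)) (u : K) : u ^ p ^ (m + 1) = u ↔ u ^ p = u := by
  have : Fintype K := Fintype.ofFinite K
  refine ⟨fun h => ?_, fun h => pow_pow_eq_self h (m + 1)⟩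
  have hsq : p ^ (2 * m + 1) * p = (p ^ (m + 1)) ^ 2 := by ring
  calc u ^ p = (u ^ Fintype.card K) ^ p := by rw [FiniteField.pow_card]
    _ = u := by rw [Fintype.card_eq_nat_card, hK, ← pow_mul, hsq, pow_pow_eq_self h]

theorem pow_three_eq_self_iff {K : Type*} [Field K] {u : K} :
    u ^ 3 = u ↔ u = 0 ∨ u = 1 ∨ u = -1 := by
  have hfactor : u ^ 3 - u = u * ((u - 1) * (u + 1)) := by ring
  rw [← sub_eq_zero, hfactor, mul_eq_zero, mul_eq_zero, sub_eq_zero, add_eq_zero_iff_eq_neg]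

theorem mul_pow_sub_pow_mul_eq_zero_iff {K : Type*} [Field K] {t : K} (ht : t ≠ 0) (s : K)
    (n : ℕ) : t * s ^ n - t ^ n * s = 0 ↔ (s / t) ^ n = s / t := by
  rw [div_pow, div_eq_div_iff (pow_ne_zero n ht) ht, sub_eq_zero]
  constructor <;> intro h <;> linear_combination h

/-- The kernel of `ς_t(s) = t·s^(3θ) − t^(3θ)·s` is exactly `{0, t, −t}`. -/
theorem stmt_1 (m : ℕ) (t : GaloisField 3 (2 * m + 1)) (ht : t ≠ 0) :
    {s : GaloisField 3 (2 * m + 1) |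
        t * s ^ (3 ^ (m + 1)) - t ^ (3 ^ (m + 1)) * s = 0} = {0, t, -t} := by
  ext s
  rw [Set.mem_ofPred_eq, mul_pow_sub_pow_mul_eq_zero_iff ht,
    FiniteField.pow_pow_succ_eq_self_iff (GaloisField.card 3 _ (by omega)),
    pow_three_eq_self_iff, div_eq_zero_iff, div_eq_one_iff_eq ht, div_eq_iff ht, neg_one_mul]
  simp [ht]
end

section
/- Let q = 3^(2m+1) and θ = 3^m. For every nonzero t ∈ F_q, the image of the map ς_t(s) = t·s^(3θ) − t^(3θ)·s has exactly θ² = 3^(2m) elements. -/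
/-- The image of `ς_t(s) = t·s^(3θ) − t^(3θ)·s` has exactly `θ² = 3^(2m)` elements. -/
theorem stmt_2 (m : ℕ) (t : GaloisField 3 (2 * m + 1)) (ht : t ≠ 0) :
    (Set.range fun s : GaloisField 3 (2 * m + 1) =>
        t * s ^ (3 ^ (m + 1)) - t ^ (3 ^ (m + 1)) * s).ncard = 3 ^ (2 * m) := by
  have hcard : Nat.card (GaloisField 3 (2 * m + 1)) = 3 ^ (2 * m + 1) :=
    GaloisField.card 3 (2 * m + 1) (by omega)
  haveI : Fintype (GaloisField 3 (2 * m + 1)) := Fintype.ofFinite _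
  have hpow : ∀ a : GaloisField 3 (2 * m + 1), a ^ (3 ^ (2 * m + 1)) = a := fun a => by
    have h := FiniteField.pow_card a
    rwa [← Nat.card_eq_fintype_card, hcard] at h
  -- the map as an additive group hom
  let f : GaloisField 3 (2 * m + 1) →+ GaloisField 3 (2 * m + 1) := AddMonoidHom.mk'
    (fun s => t * s ^ (3 ^ (m + 1)) - t ^ (3 ^ (m + 1)) * s)
    (by
      intro a b
      rw [add_pow_char_pow]
      ring)
  -- double Frobenius iterate is cubing
  have e : ∀ a : GaloisField 3 (2 * m + 1), (a ^ (3 ^ (m + 1))) ^ (3 ^ (m + 1)) = a ^ 3 := by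
    intro a
    rw [← pow_mul]
    have hm : 3 ^ (m + 1) * 3 ^ (m + 1) = 3 ^ (2 * m + 1) * 3 := by
      rw [← pow_add, ← pow_succ]; ring_nf
    rw [hm, pow_mul, hpow]
  -- kernel is {0, t, -t}
  have hker : (f.ker : Set (GaloisField 3 (2 * m + 1))) = {0, t, -t} := by
    ext s
    simp only [SetLike.mem_coe, AddMonoidHom.mem_ker, AddMonoidHom.mk'_apply,
      Set.mem_insert_iff, Set.mem_singleton_iff, f]
    constructor
    · intro h
      have h1 : t * s ^ (3 ^ (m + 1)) = t ^ (3 ^ (m + 1)) * s := by linear_combination h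
      have h2 : (t * s ^ (3 ^ (m + 1))) ^ (3 ^ (m + 1)) =
          (t ^ (3 ^ (m + 1)) * s) ^ (3 ^ (m + 1)) := by rw [h1]
      rw [mul_pow, mul_pow, e, e] at h2
      have key : t * s ^ (3 ^ (m + 1)) * (s * (s - t) * (s + t)) = 0 := by
        linear_combination s ^ 3 * h1 + s * h2
      rcases mul_eq_zero.mp key with h' | h'
      · rcases mul_eq_zero.mp h' with h'' | h''
        · exact absurd h'' ht
        · left
          exact pow_eq_zero_iff (by positivity) |>.mp h''
      · rcases mul_eq_zero.mp h' with h'' | h''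
        · rcases mul_eq_zero.mp h'' with h3 | h3
          · exact Or.inl h3
          · exact Or.inr (Or.inl (sub_eq_zero.mp h3))
        · exact Or.inr (Or.inr (eq_neg_of_add_eq_zero_left h''))
    · rintro (rfl | rfl | rfl)
      · simp
      · ring
      · have hodd : Odd (3 ^ (m + 1)) := Odd.pow ⟨1, by norm_num⟩
        rw [hodd.neg_pow]
        ring
  -- kernel has 3 elements
  have h3K : (3 : GaloisField 3 (2 * m + 1)) = 0 := by
    exact_mod_cast CharP.cast_eq_zero (GaloisField 3 (2 * m + 1)) 3
  have hne1 : (0 : GaloisField 3 (2 * m + 1)) ≠ t := fun h => ht h.symm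
  have hne2 : (0 : GaloisField 3 (2 * m + 1)) ≠ -t := fun h => ht (neg_eq_zero.mp h.symm)
  have htne : t ≠ -t := by
    intro h
    exact ht (by linear_combination t * h3K - h)
  have hkercard : Nat.card f.ker = 3 := by
    have h0 : Nat.card f.ker = ({0, t, -t} : Set (GaloisField 3 (2 * m + 1))).ncard := by
      rw [← hker, ← Nat.card_coe_set_eq]; rfl
    rw [h0, Set.ncard_insert_of_notMem (by simp [hne1, hne2]), Set.ncard_pair htne]
  -- counting
  have htot : Nat.card (GaloisField 3 (2 * m + 1)) =
      Nat.card (GaloisField 3 (2 * m + 1) ⧸ f.ker) * Nat.card f.ker :=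
    AddSubgroup.card_eq_card_quotient_mul_card_addSubgroup f.ker
  have hquot : Nat.card (GaloisField 3 (2 * m + 1) ⧸ f.ker) = Nat.card f.range :=
    Nat.card_congr (QuotientAddGroup.quotientKerEquivRange f).toEquiv
  have hrange : Nat.card f.range = 3 ^ (2 * m) := by
    rw [hquot, hkercard, hcard] at htot
    have h' : Nat.card f.range * 3 = 3 ^ (2 * m) * 3 := by
      rw [← htot, pow_succ]
    exact Nat.eq_of_mul_eq_mul_right (by norm_num) h'
  have hr : (Set.range fun s : GaloisField 3 (2 * m + 1) =>
      t * s ^ (3 ^ (m + 1)) - t ^ (3 ^ (m + 1)) * s) =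
      (f.range : Set (GaloisField 3 (2 * m + 1))) :=
    (AddMonoidHom.coe_range f).symm
  rw [hr, ← Nat.card_coe_set_eq]
  exact hrange
end

section
/- Let q = 3^(2m+1) and θ = 3^m. If t, s are nonzero elements of F_q with t·s^(3θ) = t^(3θ)·s, then s = t or s = −t. -/
/-- If `t, s` are nonzero elements of `F_q` with `t·s^(3θ) = t^(3θ)·s`, then `s = t` or `s = −t`. -/
theorem stmt_4 (m : ℕ) (t s : GaloisField 3 (2 * m + 1)) (ht : t ≠ 0) (hs : s ≠ 0)
    (h : t * s ^ (3 ^ (m + 1)) = t ^ (3 ^ (m + 1)) * s) : s = t ∨ s = -t := by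
  haveI : Fact (Nat.Prime 3) := ⟨by norm_num⟩
  haveI : Fintype (GaloisField 3 (2 * m + 1)) := Fintype.ofFinite _
  set u : GaloisField 3 (2 * m + 1) := s * t⁻¹ with hu
  have hu0 : u ≠ 0 := mul_ne_zero hs (inv_ne_zero ht)
  have h1 : u ^ (3 ^ (m + 1)) = u := by
    rw [hu, mul_pow, inv_pow, ← div_eq_mul_inv, ← div_eq_mul_inv,
      div_eq_div_iff (pow_ne_zero _ ht) ht]
    linear_combination h
  have hpos : 1 ≤ 3 ^ (m + 1) := Nat.one_le_pow _ _ (by norm_num)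
  have ha : u ^ (3 ^ (m + 1) - 1) = 1 := by
    have : u ^ (3 ^ (m + 1) - 1) * u = 1 * u := by
      rw [← pow_succ, Nat.sub_add_cancel hpos, h1, one_mul]
    exact mul_right_cancel₀ hu0 this
  have hcard : Fintype.card (GaloisField 3 (2 * m + 1)) = 3 ^ (2 * m + 1) := by
    rw [← Nat.card_eq_fintype_card]
    exact GaloisField.card 3 (2 * m + 1) (by omega)
  have hb : u ^ (3 ^ (2 * m + 1) - 1) = 1 := by
    have := FiniteField.pow_card_sub_one_eq_one u hu0
    rwa [hcard] at this
  have hda : orderOf u ∣ 3 ^ (m + 1) - 1 := orderOf_dvd_of_pow_eq_one ha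
  have hdb : orderOf u ∣ 3 ^ (2 * m + 1) - 1 := orderOf_dvd_of_pow_eq_one hb
  have h2 : (3:ℕ) ^ (m + 1) = 3 * 3 ^ m := by rw [pow_succ]; ring
  have hq : (3:ℕ) ^ (2 * m + 1) = 3 * (3 ^ m * 3 ^ m) := by
    rw [show 2 * m + 1 = m + (m + 1) by omega, pow_add, h2]; ring
  rw [h2] at hda
  rw [hq] at hdb
  have expand : 3 ^ m * (3 * 3 ^ m - 1) = 3 * (3 ^ m * 3 ^ m) - 3 ^ m := by
    rw [Nat.mul_sub, mul_one, mul_left_comm]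
  have hdc : orderOf u ∣ 3 ^ m - 1 := by
    have key := Nat.dvd_sub hdb (Dvd.dvd.mul_left hda (3 ^ m))
    rw [expand] at key
    have hm1 : 1 ≤ (3:ℕ) ^ m := Nat.one_le_pow _ _ (by norm_num)
    have hle : (3:ℕ) ^ m ≤ 3 * (3 ^ m * 3 ^ m) := by nlinarith
    have heq : (3 * (3 ^ m * 3 ^ m) - 1) - (3 * (3 ^ m * 3 ^ m) - 3 ^ m) = 3 ^ m - 1 := by
      generalize (3:ℕ) ^ m * 3 ^ m = P at *
      omega
    rwa [heq] at key
  have hd2 : orderOf u ∣ 2 := by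
    have key := Nat.dvd_sub hda (Dvd.dvd.mul_left hdc 3)
    have hm1 : 1 ≤ (3:ℕ) ^ m := Nat.one_le_pow _ _ (by norm_num)
    have heq : (3 * 3 ^ m - 1) - 3 * (3 ^ m - 1) = 2 := by omega
    rwa [heq] at key
  have hu2 : u * u = 1 := by
    have := orderOf_dvd_iff_pow_eq_one.mp hd2
    rwa [pow_two] at this
  rcases mul_self_eq_one_iff.mp hu2 with h1 | h1
  · left
    have : s * t⁻¹ * t = 1 * t := by rw [← hu, h1]
    rwa [mul_assoc, inv_mul_cancel₀ ht, mul_one, one_mul] at this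
  · right
    have : s * t⁻¹ * t = -1 * t := by rw [← hu, h1]
    rwa [mul_assoc, inv_mul_cancel₀ ht, mul_one, neg_one_mul] at this
end

section
/- In the group U = ²G₂^syl(q) with multiplication Y(t₁,t₃,t₄)·Y(s₁,s₃,s₄) = Y(t₁+s₁, t₃+s₃−t₁s₁^(3θ), t₄+s₄+t₁s₁^(3θ+1)−t₁²s₁^(3θ)−t₃s₁), the commutator [Y(t₁,t₃,t₄), Y(s₁,s₃,s₄)] = x⁻¹y⁻¹xy equals Y(0, t₁^(3θ)s₁ − t₁s₁^(3θ), (t₁s₁^(3θ+1) − t₁^(3θ+1)s₁) + (t₁^(3θ)s₁² − t₁²s₁^(3θ)) + (t₁s₃ − t₃s₁)). -/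
/-!
The commutator is a direct computation in coordinates. It uses only two facts about `F_q`: the
twisting exponent `3θ = 3^(m+1)` is odd, so `(-t)^(3θ) = -t^(3θ)` and `(-t)^(3θ+1) = t^(3θ+1)`,
and `3 = 0`, which is needed to cancel the `t₁^(3θ)` terms in the last coordinate. Hence the
formula holds for the same multiplication over any commutative ring of characteristic three and
any odd twisting exponent.
-/

/-- The finite field with `3^(2m+1)` elements. -/
abbrev K (m : ℕ) := GaloisField 3 (2 * m + 1)

/-- Multiplication of `²G₂^syl(q)` in the coordinates `Y(t₁,t₃,t₄) ∈ F_q³`. -/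
noncomputable def Ymul (m : ℕ) (x y : K m × K m × K m) : K m × K m × K m :=
  (x.1 + y.1,
   x.2.1 + y.2.1 - x.1 * y.1 ^ (3 ^ (m + 1)),
   x.2.2 + y.2.2 + x.1 * y.1 ^ (3 ^ (m + 1) + 1) - x.1 ^ 2 * y.1 ^ (3 ^ (m + 1)) -
     x.2.1 * y.1)

/-- Inversion of `²G₂^syl(q)`. -/
noncomputable def Yinv (m : ℕ) (x : K m × K m × K m) : K m × K m × K m :=
  (-x.1, -x.2.1 - x.1 ^ (3 ^ (m + 1) + 1), -x.2.2 + x.1 ^ (3 ^ (m + 1) + 2) - x.1 * x.2.1)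

namespace ReeSylow

variable {R : Type*} [CommRing R]

/-- `Ymul` with `F_q` replaced by `R` and the exponent `3θ` replaced by `n`. -/
def mul (n : ℕ) (x y : R × R × R) : R × R × R :=
  (x.1 + y.1,
   x.2.1 + y.2.1 - x.1 * y.1 ^ n,
   x.2.2 + y.2.2 + x.1 * y.1 ^ (n + 1) - x.1 ^ 2 * y.1 ^ n - x.2.1 * y.1)

def inv (n : ℕ) (x : R × R × R) : R × R × R :=
  (-x.1, -x.2.1 - x.1 ^ (n + 1), -x.2.2 + x.1 ^ (n + 2) - x.1 * x.2.1)

theorem mul_commutator {n : ℕ} (h3 : (3 : R) = 0) (hn : Odd n) (t₁ t₃ t₄ s₁ s₃ s₄ : R) :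
    mul n (mul n (mul n (inv n (t₁, t₃, t₄)) (inv n (s₁, s₃, s₄))) (t₁, t₃, t₄)) (s₁, s₃, s₄) =
      (0, t₁ ^ n * s₁ - t₁ * s₁ ^ n,
        (t₁ * s₁ ^ (n + 1) - t₁ ^ (n + 1) * s₁) + (t₁ ^ n * s₁ ^ 2 - t₁ ^ 2 * s₁ ^ n) +
          (t₁ * s₃ - t₃ * s₁)) := by
  have neg_pow_odd (x : R) : (-x) ^ n = -x ^ n := hn.neg_pow x
  have neg_pow_even (x : R) : (-x) ^ (n + 1) = x ^ (n + 1) := hn.add_one.neg_pow x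
  simp only [mul, inv, Prod.mk.injEq, neg_pow_odd, neg_pow_even]
  refine ⟨by ring, by ring, ?_⟩
  linear_combination (-s₁ ^ 2 * t₁ ^ n - t₁ * s₁ * t₁ ^ n + t₁ ^ 2 * s₁ ^ n) * h3

end ReeSylow

/-- The commutator `[x,y] = x⁻¹y⁻¹xy` in `²G₂^syl(q)`. -/
theorem stmt_7 (m : ℕ) (t₁ t₃ t₄ s₁ s₃ s₄ : K m) :
    Ymul m (Ymul m (Ymul m (Yinv m (t₁, t₃, t₄)) (Yinv m (s₁, s₃, s₄))) (t₁, t₃, t₄))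
        (s₁, s₃, s₄) =
      (0, t₁ ^ (3 ^ (m + 1)) * s₁ - t₁ * s₁ ^ (3 ^ (m + 1)),
        (t₁ * s₁ ^ (3 ^ (m + 1) + 1) - t₁ ^ (3 ^ (m + 1) + 1) * s₁) +
          (t₁ ^ (3 ^ (m + 1)) * s₁ ^ 2 - t₁ ^ 2 * s₁ ^ (3 ^ (m + 1))) +
          (t₁ * s₃ - t₃ * s₁)) :=
  ReeSylow.mul_commutator (by exact_mod_cast CharP.cast_eq_zero (K m) 3)
    (Odd.pow (by decide)) t₁ t₃ t₄ s₁ s₃ s₄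
end

section
/- In the group U = ²G₂^syl(q), the conjugate of Y(t₁,t₃,t₄) by Y(s₁,s₃,s₄) (i.e. Y(s₁,s₃,s₄)·Y(t₁,t₃,t₄)·Y(s₁,s₃,s₄)⁻¹) equals Y(t₁, t₃ + t₁s₁^(3θ) − t₁^(3θ)s₁, t₄ + t₁²s₁^(3θ) + t₁^(3θ)s₁² + t₁^(3θ+1)s₁ + t₃s₁ − t₁s₃). -/
/-!
Conjugation is a polynomial identity in the coordinates once the twist `x ↦ x ^ n`, `n = 3θ`, is
treated as an independent variable; it only needs `(-s) ^ n = -s ^ n` (as `n` is odd) and `3 = 0`,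
the latter to cancel the terms `3 s₁² t₁ ^ n` and the like in the last coordinate.
-/

section

variable {R : Type*} [CommRing R]

/-- `Ymul m` is `twistedMul (3 ^ (m + 1))` over `K m`, and `Yinv m` likewise. -/
def twistedMul (n : ℕ) (x y : R × R × R) : R × R × R :=
  (x.1 + y.1,
   x.2.1 + y.2.1 - x.1 * y.1 ^ n,
   x.2.2 + y.2.2 + x.1 * y.1 ^ (n + 1) - x.1 ^ 2 * y.1 ^ n - x.2.1 * y.1)

def twistedInv (n : ℕ) (x : R × R × R) : R × R × R :=
  (-x.1, -x.2.1 - x.1 ^ (n + 1), -x.2.2 + x.1 ^ (n + 2) - x.1 * x.2.1)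

theorem twistedMul_twistedInv_conj {n : ℕ} (h3 : (3 : R) = 0)
    (hn : Odd n) (t₁ t₃ t₄ s₁ s₃ s₄ : R) :
    twistedMul n (twistedMul n (s₁, s₃, s₄) (t₁, t₃, t₄)) (twistedInv n (s₁, s₃, s₄)) =
      (t₁, t₃ + t₁ * s₁ ^ n - t₁ ^ n * s₁,
        t₄ + (t₁ ^ 2 * s₁ ^ n + t₁ ^ n * s₁ ^ 2) + t₁ ^ (n + 1) * s₁ + (t₃ * s₁ - t₁ * s₃)) := by
  have neg_pow : (-s₁) ^ n = -s₁ ^ n := hn.neg_pow s₁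
  simp only [twistedMul, twistedInv, Prod.mk.injEq, pow_succ _ n, pow_add _ n 2, neg_pow]
  generalize s₁ ^ n = S, t₁ ^ n = T
  refine ⟨by ring, by ring, ?_⟩
  linear_combination (s₁ ^ 2 * S - s₁ ^ 2 * T + s₁ * t₁ * S) * h3

end

/-- Conjugation `Y(s₁,s₃,s₄)·Y(t₁,t₃,t₄)·Y(s₁,s₃,s₄)⁻¹` in `²G₂^syl(q)`. -/
theorem stmt_8 (m : ℕ) (t₁ t₃ t₄ s₁ s₃ s₄ : K m) :
    Ymul m (Ymul m (s₁, s₃, s₄) (t₁, t₃, t₄)) (Yinv m (s₁, s₃, s₄)) =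
      (t₁, t₃ + t₁ * s₁ ^ (3 ^ (m + 1)) - t₁ ^ (3 ^ (m + 1)) * s₁,
        t₄ + (t₁ ^ 2 * s₁ ^ (3 ^ (m + 1)) + t₁ ^ (3 ^ (m + 1)) * s₁ ^ 2) +
          t₁ ^ (3 ^ (m + 1) + 1) * s₁ + (t₃ * s₁ - t₁ * s₃)) :=
  twistedMul_twistedInv_conj (by exact_mod_cast CharP.cast_eq_zero (K m) 3)
    (Odd.pow (by decide)) t₁ t₃ t₄ s₁ s₃ s₄
end

section
/- In the group U = ²G₂^syl(q), the conjugacy class of Y(0,t₃*,0) for t₃* ∈ F_q^* is exactly {Y(0, t₃*, s₄) : s₄ ∈ F_q}, which has q elements. -/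
lemma Ymul_Ymul_Yinv_of_fst_eq_zero (m : ℕ) (t₃ t₄ : K m) (g : K m × K m × K m) :
    Ymul m (Ymul m g (0, t₃, t₄)) (Yinv m g) = (0, t₃, t₄ + t₃ * g.1) := by
  obtain ⟨a, b, c⟩ := g
  have h3 : (3 : K m) = 0 := by exact_mod_cast CharP.cast_eq_zero (K m) 3
  have hodd : Odd (3 ^ (m + 1)) := Odd.pow (by decide)
  have hneg : (-a) ^ (3 ^ (m + 1)) = -a ^ (3 ^ (m + 1)) := hodd.neg_pow a
  have hneg' : (-a) ^ (3 ^ (m + 1) + 1) = a ^ (3 ^ (m + 1) + 1) := hodd.add_one.neg_pow a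
  have hzero : (0 : K m) ^ (3 ^ (m + 1)) = 0 := zero_pow (by positivity)
  simp only [Ymul, Yinv, hneg, hneg', hzero]
  refine Prod.ext (by simp) (Prod.ext (by ring) ?_)
  linear_combination a ^ (3 ^ (m + 1)) * a ^ 2 * h3

lemma range_conj_of_fst_eq_zero (m : ℕ) {t₃ : K m} (ht : t₃ ≠ 0) (t₄ : K m) :
    (Set.range fun g : K m × K m × K m => Ymul m (Ymul m g (0, t₃, t₄)) (Yinv m g)) =
      {z : K m × K m × K m | ∃ s₄ : K m, z = (0, t₃, s₄)} := by
  ext z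
  simp only [Set.mem_range, Set.mem_ofPred_eq, Ymul_Ymul_Yinv_of_fst_eq_zero]
  constructor
  · rintro ⟨g, rfl⟩
    exact ⟨_, rfl⟩
  · rintro ⟨s₄, rfl⟩
    refine ⟨((s₄ - t₄) / t₃, 0, 0), ?_⟩
    simp only [mul_div_cancel₀ _ ht, add_sub_cancel]

lemma ncard_setOf_fst_eq_zero_snd_eq (m : ℕ) (t₃ : K m) :
    {z : K m × K m × K m | ∃ s₄ : K m, z = (0, t₃, s₄)}.ncard = 3 ^ (2 * m + 1) := by
  have hrange : {z : K m × K m × K m | ∃ s₄ : K m, z = (0, t₃, s₄)} =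
      Set.range fun s₄ : K m => ((0 : K m), t₃, s₄) := by
    ext z
    simp [eq_comm]
  rw [hrange, Set.ncard_range_of_injective fun x y h => (Prod.ext_iff.1 (Prod.ext_iff.1 h).2).2]
  exact GaloisField.card 3 (2 * m + 1) (by omega)

/-- The conjugacy class of `Y(0,t₃*,0)`, `t₃* ≠ 0`, is `{Y(0,t₃*,s₄) : s₄ ∈ F_q}`,
of size `q`. -/
theorem stmt_10 (m : ℕ) (t₃ : K m) (ht : t₃ ≠ 0) :
    (Set.range fun g : K m × K m × K m =>
        Ymul m (Ymul m g (0, t₃, 0)) (Yinv m g)) =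
      {z : K m × K m × K m | ∃ s₄ : K m, z = (0, t₃, s₄)} ∧
    (Set.range fun g : K m × K m × K m =>
        Ymul m (Ymul m g (0, t₃, 0)) (Yinv m g)).ncard = 3 ^ (2 * m + 1) := by
  rw [range_conj_of_fst_eq_zero m ht 0]
  exact ⟨rfl, ncard_setOf_fst_eq_zero_snd_eq m t₃⟩
end

section
/- In the group U = ²G₂^syl(q), for every t₄ ∈ F_q the element Y(0,0,t₄) is a singleton conjugacy class, i.e. Y(0,0,t₄) is central. -/
/-- Each `Y(0,0,t₄)` is central, i.e. its conjugacy class is the singleton `{Y(0,0,t₄)}`. -/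
theorem stmt_11 (m : ℕ) (t₄ : K m) :
    (∀ x : K m × K m × K m, Ymul m (0, 0, t₄) x = Ymul m x (0, 0, t₄)) ∧
    (Set.range fun g : K m × K m × K m =>
        Ymul m (Ymul m g (0, 0, t₄)) (Yinv m g)) = {(0, 0, t₄)} := by
  have h : (3:ℕ)^(m+1) ≠ 0 := by positivity
  have ho : Odd ((3:ℕ)^(m+1)) := Odd.pow ⟨1, rfl⟩
  constructor
  · intro x
    simp only [Ymul, Prod.mk.injEq, zero_pow h]
    refine ⟨by ring, by ring, by ring⟩
  · ext z
    simp only [Set.mem_range, Set.mem_singleton_iff]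
    constructor
    · rintro ⟨g, rfl⟩
      have ho2 : Odd ((3:ℕ)^(m+1)+2) := by obtain ⟨k,hk⟩ := ho; exact ⟨k+1, by omega⟩
      simp only [Ymul, Yinv, Prod.mk.injEq, add_zero, zero_add, zero_mul, mul_zero,
        zero_pow h, ho.neg_pow, Even.neg_pow ho.add_one, ho2.neg_pow,
        zero_pow (Nat.succ_ne_zero (3^(m+1))), pow_succ _ (3^(m+1)+1)]
      have h3 : (3 : K m) = 0 := by exact_mod_cast CharP.cast_eq_zero (K m) 3
      refine ⟨by ring, by rw [pow_succ]; ring, ?_⟩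
      rw [pow_succ]
      linear_combination (g.1 ^ 2 * g.1 ^ (3 ^ (m + 1))) * h3
    · rintro rfl
      exact ⟨(0,0,0), by simp [Ymul, Yinv, zero_pow h]⟩
end

section
/- In the group U = ²G₂^syl(q), for a nonzero t₁* ∈ F_q the conjugacy class of Y(t₁*, t₃, 0) is {Y(t₁*, t₃ + v, s₄) : v ∈ im ς_{t₁*}, s₄ ∈ F_q} where ς_{t₁*}(s) = t₁*·s^(3θ) − (t₁*)^(3θ)·s; in particular this conjugacy class has q·3^(2m) elements. -/
lemma K_three_eq_zero (m : ℕ) : (3 : K m) = 0 := by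
  exact_mod_cast CharP.cast_eq_zero (K m) 3

lemma K_odd_phi (m : ℕ) : Odd (3 ^ (m + 1)) := Odd.pow ⟨1, by norm_num⟩

lemma K_pow_q (m : ℕ) (y : K m) : y ^ (3 ^ (2 * m + 1)) = y := by
  have : Fintype (K m) := Fintype.ofFinite _
  have hc : Fintype.card (K m) = 3 ^ (2 * m + 1) := by
    rw [← Nat.card_eq_fintype_card]; exact GaloisField.card 3 (2 * m + 1) (by omega)
  rw [← hc]; exact FiniteField.pow_card y

lemma K_pow_phi_phi (m : ℕ) (y : K m) : (y ^ (3 ^ (m + 1))) ^ (3 ^ (m + 1)) = y ^ 3 := by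
  rw [← pow_mul]
  have h : 3 ^ (m + 1) * 3 ^ (m + 1) = 3 ^ (2 * m + 1) * 3 := by
    rw [← pow_add, ← pow_succ]; congr 1; omega
  rw [h, pow_mul, K_pow_q]

/-- Explicit formula for the conjugate of `Y(t₁,t₃,0)` by `Y(a,b,c)`. -/
lemma conj_eq (m : ℕ) (t₁ t₃ a b c : K m) :
    Ymul m (Ymul m (a, b, c) (t₁, t₃, 0)) (Yinv m (a, b, c)) =
    (t₁, t₃ + (t₁ * a ^ (3 ^ (m + 1)) - t₁ ^ (3 ^ (m + 1)) * a),
     a * t₃ - b * t₁ + a ^ 2 * t₁ ^ (3 ^ (m + 1)) + a * t₁ * t₁ ^ (3 ^ (m + 1)) +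
       t₁ ^ 2 * a ^ (3 ^ (m + 1))) := by
  have h3 := K_three_eq_zero m
  have hp1 : ∀ x : K m, x ^ (3 ^ (m + 1) + 1) = x ^ (3 ^ (m + 1)) * x := by
    intro x; rw [pow_add, pow_one]
  have hp2 : ∀ x : K m, x ^ (3 ^ (m + 1) + 2) = x ^ (3 ^ (m + 1)) * x * x := by
    intro x; rw [pow_add]; ring
  have hneg : (-a) ^ (3 ^ (m + 1)) = -(a ^ (3 ^ (m + 1))) := (K_odd_phi m).neg_pow a
  simp only [Ymul, Yinv, Prod.mk.injEq, hp1, hp2, hneg]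
  refine ⟨by ring, by ring_nf, ?_⟩
  linear_combination (a * t₁ * a ^ (3 ^ (m + 1)) + a ^ 2 * a ^ (3 ^ (m + 1))
    - a ^ 2 * t₁ ^ (3 ^ (m + 1))) * h3

/-- `ς_{t₁}` as an additive homomorphism. -/
noncomputable def sig (m : ℕ) (t₁ : K m) : K m →+ K m where
  toFun s := t₁ * s ^ (3 ^ (m + 1)) - t₁ ^ (3 ^ (m + 1)) * s
  map_zero' := by simp
  map_add' x y := by
    show t₁ * (x + y) ^ (3 ^ (m + 1)) - t₁ ^ (3 ^ (m + 1)) * (x + y) = _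
    rw [add_pow_char_pow]; ring

lemma sig_ker (m : ℕ) (t₁ : K m) (ht : t₁ ≠ 0) :
    ((sig m t₁).ker : Set (K m)) = {0, t₁, -t₁} := by
  have h3 := K_three_eq_zero m
  ext x
  simp only [SetLike.mem_coe, AddMonoidHom.mem_ker, sig, AddMonoidHom.coe_mk,
    ZeroHom.coe_mk, Set.mem_insert_iff, Set.mem_singleton_iff]
  constructor
  · intro h
    have h' : t₁ * x ^ (3 ^ (m + 1)) = t₁ ^ (3 ^ (m + 1)) * x := sub_eq_zero.mp h
    have h2 := congrArg (· ^ (3 ^ (m + 1))) h'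
    simp only [mul_pow, K_pow_phi_phi] at h2
    -- h2 : t₁ ^ φ * x ^ 3 = t₁ ^ 3 * x ^ φ  (need to check exact shape)
    have h4 : t₁ ^ (3 ^ (m + 1)) * t₁ * (x * (x - t₁) * (x + t₁)) = 0 := by
      linear_combination t₁ * h2 + t₁ ^ 3 * h'
    have h5 : x * (x - t₁) * (x + t₁) = 0 :=
      (mul_eq_zero.mp h4).resolve_left (mul_ne_zero (pow_ne_zero _ ht) ht)
    rcases mul_eq_zero.mp h5 with h6 | h6
    · rcases mul_eq_zero.mp h6 with h7 | h7
      · exact Or.inl h7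
      · exact Or.inr (Or.inl (sub_eq_zero.mp h7))
    · exact Or.inr (Or.inr (eq_neg_of_add_eq_zero_left h6))
  · rintro (rfl | rfl | rfl)
    · simp
    · ring
    · rw [(K_odd_phi m).neg_pow]; ring

/-- The conjugacy class of `Y(t₁*,t₃,0)`, `t₁* ≠ 0`, is
`{Y(t₁*, t₃+v, s₄) : v ∈ im ς_{t₁*}, s₄ ∈ F_q}`, of size `q·3^(2m)`. -/
theorem stmt_12 (m : ℕ) (t₁ t₃ : K m) (ht : t₁ ≠ 0) :
    (Set.range fun g : K m × K m × K m =>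
        Ymul m (Ymul m g (t₁, t₃, 0)) (Yinv m g)) =
      {z : K m × K m × K m |
        ∃ v ∈ Set.range (fun s : K m =>
            t₁ * s ^ (3 ^ (m + 1)) - t₁ ^ (3 ^ (m + 1)) * s),
          ∃ s₄ : K m, z = (t₁, t₃ + v, s₄)} ∧
    (Set.range fun g : K m × K m × K m =>
        Ymul m (Ymul m g (t₁, t₃, 0)) (Yinv m g)).ncard =
      3 ^ (2 * m + 1) * 3 ^ (2 * m) := by
  have h3 := K_three_eq_zero m
  set R : Set (K m) := Set.range (fun s : K m =>
      t₁ * s ^ (3 ^ (m + 1)) - t₁ ^ (3 ^ (m + 1)) * s) with hRdef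
  have hset : (Set.range fun g : K m × K m × K m =>
        Ymul m (Ymul m g (t₁, t₃, 0)) (Yinv m g)) =
      {z : K m × K m × K m | ∃ v ∈ R, ∃ s₄ : K m, z = (t₁, t₃ + v, s₄)} := by
    ext z
    simp only [Set.mem_range, Set.mem_setOf_eq]
    constructor
    · rintro ⟨⟨a, b, c⟩, rfl⟩
      exact ⟨t₁ * a ^ (3 ^ (m + 1)) - t₁ ^ (3 ^ (m + 1)) * a, ⟨a, rfl⟩, _,
        conj_eq m t₁ t₃ a b c⟩
    · rintro ⟨v, ⟨a, rfl⟩, s₄, rfl⟩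
      refine ⟨(a, (a * t₃ + a ^ 2 * t₁ ^ (3 ^ (m + 1)) + a * t₁ * t₁ ^ (3 ^ (m + 1)) +
        t₁ ^ 2 * a ^ (3 ^ (m + 1)) - s₄) * t₁⁻¹, 0), ?_⟩
      rw [conj_eq]
      refine Prod.ext rfl (Prod.ext rfl ?_)
      field_simp
      ring
  refine ⟨hset, ?_⟩
  rw [hset]
  -- express as an image of a product set
  have himg : {z : K m × K m × K m | ∃ v ∈ R, ∃ s₄ : K m, z = (t₁, t₃ + v, s₄)} =
      (fun p : K m × K m => (t₁, t₃ + p.1, p.2)) '' (R ×ˢ (Set.univ : Set (K m))) := by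
    ext z
    constructor
    · rintro ⟨v, hv, s₄, rfl⟩
      exact ⟨(v, s₄), ⟨hv, trivial⟩, rfl⟩
    · rintro ⟨⟨v, s₄⟩, ⟨hv, -⟩, rfl⟩
      exact ⟨v, hv, s₄, rfl⟩
  have hinj : Function.Injective (fun p : K m × K m => (t₁, t₃ + p.1, p.2)) := by
    intro p q h
    simp only [Prod.mk.injEq] at h
    exact Prod.ext (add_left_cancel h.2.1) h.2.2
  rw [himg, Set.ncard_image_of_injective _ hinj]
  have hprod : (R ×ˢ (Set.univ : Set (K m))).ncard =
      R.ncard * (Set.univ : Set (K m)).ncard := by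
    rw [← Nat.card_coe_set_eq, ← Nat.card_coe_set_eq, ← Nat.card_coe_set_eq,
      Nat.card_congr (Equiv.Set.prod _ _), Nat.card_prod]
  -- cardinality of the kernel of `sig`
  have hK : Nat.card (K m) = 3 ^ (2 * m + 1) := GaloisField.card 3 (2 * m + 1) (by omega)
  have hker : Nat.card (sig m t₁).ker = 3 := by
    have e : Nat.card (sig m t₁).ker = (((sig m t₁).ker : Set (K m))).ncard :=
      Nat.card_coe_set_eq _
    rw [e, sig_ker m t₁ ht]
    have h01 : (t₁ : K m) ≠ -t₁ := by
      intro h; exact ht (by linear_combination (-1 : K m) * h + t₁ * h3)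
    have hz : (0 : K m) ∉ ({t₁, -t₁} : Set (K m)) := by
      simp only [Set.mem_insert_iff, Set.mem_singleton_iff]
      push_neg
      exact ⟨fun h => ht h.symm, fun h => ht (by linear_combination h)⟩
    rw [Set.ncard_insert_of_notMem hz, Set.ncard_insert_of_notMem (by simpa using h01),
      Set.ncard_singleton]
  have hquot : Nat.card (K m ⧸ (sig m t₁).ker) = Nat.card (sig m t₁).range :=
    Nat.card_congr (QuotientAddGroup.quotientKerEquivRange (sig m t₁)).toEquiv
  have hdecomp : Nat.card (K m) =
      Nat.card (K m ⧸ (sig m t₁).ker) * Nat.card (sig m t₁).ker :=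
    AddSubgroup.card_eq_card_quotient_mul_card_addSubgroup _
  have hRcard : R.ncard = 3 ^ (2 * m) := by
    have hval : Nat.card (sig m t₁).range = 3 ^ (2 * m) := by
      have h6 := hdecomp
      rw [hK, hker, hquot] at h6
      have h7 : (3 : ℕ) ^ (2 * m + 1) = 3 ^ (2 * m) * 3 := pow_succ 3 (2 * m)
      omega
    have e : R.ncard = Nat.card (sig m t₁).range := by
      rw [hRdef, ← Nat.card_coe_set_eq]
      exact Nat.card_congr (Equiv.setCongr (AddMonoidHom.coe_range (sig m t₁)).symm)
    rw [e, hval]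
  rw [hprod, hRcard, Set.ncard_univ, hK, mul_comm]
end

section
/- The number of conjugacy classes of the group U = ²G₂^syl(3^(2m+1)) is 5q − 4 where q = 3^(2m+1). -/
namespace Stmt13Aux

attribute [local instance] Classical.propDecidable

lemma char3 (m : ℕ) : (3 : K m) = 0 := CharP.cast_eq_zero (K m) 3

lemma hQodd (m : ℕ) : Odd ((3 : ℕ) ^ (m + 1)) := Odd.pow (by decide)

lemma hQne (m : ℕ) : (3 : ℕ) ^ (m + 1) ≠ 0 := by positivity

lemma card_K (m : ℕ) : Nat.card (K m) = 3 ^ (2 * m + 1) :=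
  GaloisField.card 3 (2 * m + 1) (by omega)

lemma pow_q (m : ℕ) (x : K m) : x ^ (3 : ℕ) ^ (2 * m + 1) = x := by
  letI : Fintype (K m) := Fintype.ofFinite _
  have h := FiniteField.pow_card x
  rwa [← Nat.card_eq_fintype_card, card_K m] at h

lemma pow_QQ (m : ℕ) (x : K m) : x ^ ((3 : ℕ) ^ (m + 1) * 3 ^ (m + 1)) = x ^ 3 := by
  have h1 : (3 : ℕ) ^ (m + 1) * 3 ^ (m + 1) = 3 ^ (2 * m + 1) * 3 := by
    rw [← pow_add, ← pow_succ]
    congr 1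
    omega
  rw [h1, pow_mul, pow_q]

/-- The explicit formula for conjugation. -/
lemma conj_eq (m : ℕ) (g x : K m × K m × K m) :
    Ymul m (Ymul m g x) (Yinv m g) =
      (x.1,
       x.2.1 + x.1 * g.1 ^ 3 ^ (m + 1) - g.1 * x.1 ^ 3 ^ (m + 1),
       x.2.2 + g.1 * x.2.1 - g.2.1 * x.1 + g.1 * x.1 ^ (3 ^ (m + 1) + 1)
         + g.1 ^ 2 * x.1 ^ 3 ^ (m + 1) + g.1 ^ 3 ^ (m + 1) * x.1 ^ 2) := by
  obtain ⟨a, b, c⟩ := g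
  obtain ⟨t, u, v⟩ := x
  have h3 := char3 m
  have e1 : ∀ y : K m, y ^ (3 ^ (m + 1) + 1) = y ^ (3 : ℕ) ^ (m + 1) * y := fun y => by
    rw [pow_add, pow_one]
  have e2 : ∀ y : K m, y ^ (3 ^ (m + 1) + 2) = y ^ (3 : ℕ) ^ (m + 1) * y * y := fun y => by
    rw [pow_add, pow_two, ← mul_assoc]
  have hneg : (-a : K m) ^ (3 : ℕ) ^ (m + 1) = -(a ^ (3 : ℕ) ^ (m + 1)) := (hQodd m).neg_pow a
  simp only [Ymul, Yinv, e1, e2, hneg, Prod.mk.injEq]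
  refine ⟨by ring, by ring, ?_⟩
  linear_combination (a ^ (3 : ℕ) ^ (m + 1) * a * a - a ^ 2 * t ^ (3 : ℕ) ^ (m + 1)
    + t * a ^ (3 : ℕ) ^ (m + 1) * a) * h3

/-- The additive map `a ↦ t·a^Q − a·t^Q`. -/
noncomputable def phi (m : ℕ) (t : K m) : K m →+ K m where
  toFun a := t * a ^ (3 : ℕ) ^ (m + 1) - a * t ^ (3 : ℕ) ^ (m + 1)
  map_zero' := by simp [zero_pow (hQne m)]
  map_add' a b := by
    rw [add_pow_char_pow a b 3 (m + 1)]
    ring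

lemma phi_apply (m : ℕ) (t a : K m) :
    phi m t a = t * a ^ (3 : ℕ) ^ (m + 1) - a * t ^ (3 : ℕ) ^ (m + 1) := rfl

lemma phi_eq_zero_iff (m : ℕ) {t : K m} (ht : t ≠ 0) (a : K m) :
    phi m t a = 0 ↔ a = 0 ∨ a = t ∨ a = -t := by
  rw [phi_apply, sub_eq_zero]
  constructor
  · intro h
    have h2 := congrArg (· ^ (3 : ℕ) ^ (m + 1)) h
    simp only [mul_pow, ← pow_mul, pow_QQ] at h2
    have h5 : t ^ (3 : ℕ) ^ (m + 1) * (a ^ 3 * t) = t ^ (3 : ℕ) ^ (m + 1) * (a * t ^ 3) := by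
      linear_combination t * h2 + t ^ 3 * h
    have h6 := mul_left_cancel₀ (pow_ne_zero _ ht) h5
    have h7 : a ^ 3 = a * t ^ 2 := mul_right_cancel₀ ht (by linear_combination h6)
    have h8 : a * ((a - t) * (a + t)) = 0 := by linear_combination h7
    rcases mul_eq_zero.mp h8 with h | h
    · exact Or.inl h
    · rcases mul_eq_zero.mp h with h | h
      · exact Or.inr (Or.inl (sub_eq_zero.mp h))
      · exact Or.inr (Or.inr (eq_neg_of_add_eq_zero_left h))
  · rintro (rfl | rfl | rfl)
    · simp [zero_pow (hQne m)]
    · ring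
    · rw [(hQodd m).neg_pow]; ring

lemma t_ne_neg (m : ℕ) {t : K m} (ht : t ≠ 0) : t ≠ -t := by
  intro h
  apply ht
  linear_combination (-1 : K m) * h + t * char3 m

lemma card_ker (m : ℕ) {t : K m} (ht : t ≠ 0) : Nat.card (phi m t).ker = 3 := by
  have hset : ((phi m t).ker : Set (K m)) = {0, t, -t} := by
    ext a
    simp only [SetLike.mem_coe, AddMonoidHom.mem_ker, phi_eq_zero_iff m ht,
      Set.mem_insert_iff, Set.mem_singleton_iff]
  have h0 : (0 : K m) ∉ ({t, -t} : Set (K m)) := by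
    simp only [Set.mem_insert_iff, Set.mem_singleton_iff]
    push_neg
    exact ⟨Ne.symm ht, fun h => ht (by linear_combination h)⟩
  have h1 : t ∉ ({-t} : Set (K m)) := by simpa using t_ne_neg m ht
  have e : Nat.card (phi m t).ker = Nat.card ({0, t, -t} : Set (K m)) :=
    Nat.card_congr (Equiv.setCongr hset)
  rw [e, Nat.card_coe_set_eq, Set.ncard_insert_of_notMem h0 (Set.toFinite _),
    Set.ncard_insert_of_notMem h1 (Set.toFinite _), Set.ncard_singleton]

lemma card_quot (m : ℕ) {t : K m} (ht : t ≠ 0) :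
    Nat.card (K m ⧸ (phi m t).range) = 3 := by
  have e1 := AddSubgroup.card_eq_card_quotient_mul_card_addSubgroup (phi m t).range
  have e3 := AddSubgroup.card_eq_card_quotient_mul_card_addSubgroup (phi m t).ker
  have e2 : Nat.card (K m ⧸ (phi m t).ker) = Nat.card (phi m t).range :=
    Nat.card_congr (QuotientAddGroup.quotientKerEquivRange (phi m t)).toEquiv
  rw [card_ker m ht, e2] at e3
  rw [e3] at e1
  have hpos : 0 < Nat.card (phi m t).range := Nat.card_pos
  have h4 : Nat.card (K m ⧸ (phi m t).range) * Nat.card (phi m t).range =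
      3 * Nat.card (phi m t).range := by linarith [e1]
  exact Nat.eq_of_mul_eq_mul_right hpos h4

/-- The conjugacy class of `x`. -/
noncomputable def Cl (m : ℕ) (x : K m × K m × K m) : Set (K m × K m × K m) :=
  Set.range fun g => Ymul m (Ymul m g x) (Yinv m g)

lemma mem_self (m : ℕ) (x : K m × K m × K m) : x ∈ Cl m x := by
  refine ⟨(0, 0, 0), ?_⟩
  simp only [conj_eq]
  simp [zero_pow (hQne m), Prod.ext_iff]

lemma cl_central (m : ℕ) (v : K m) : Cl m (0, 0, v) = {((0 : K m), (0 : K m), v)} := by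
  have z1 : (0 : K m) ^ ((3 : ℕ) ^ (m + 1) + 1) = 0 := zero_pow (by positivity)
  ext p
  constructor
  · rintro ⟨g, rfl⟩
    simp only [conj_eq]
    simp [zero_pow (hQne m), z1, Prod.ext_iff]
  · rintro rfl
    exact mem_self m _

lemma cl_t0 (m : ℕ) {u : K m} (hu : u ≠ 0) (v : K m) :
    Cl m (0, u, v) = {p | p.1 = 0 ∧ p.2.1 = u} := by
  have z1 : (0 : K m) ^ ((3 : ℕ) ^ (m + 1) + 1) = 0 := zero_pow (by positivity)
  ext p
  simp only [Set.mem_setOf_eq]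
  constructor
  · rintro ⟨g, rfl⟩
    simp only [conj_eq]
    exact ⟨trivial, by simp [zero_pow (hQne m)]⟩
  · rintro ⟨h1, h2⟩
    obtain ⟨p1, p2, p3⟩ := p
    simp only at h1 h2
    subst h1; subst h2
    refine ⟨((p3 - v) / p2, 0, 0), ?_⟩
    simp only [conj_eq, Prod.mk.injEq, zero_pow (hQne m), z1]
    refine ⟨trivial, by ring, ?_⟩
    field_simp
    ring

lemma cl_gen (m : ℕ) {t : K m} (ht : t ≠ 0) (u v : K m) :
    Cl m (t, u, v) = {p | p.1 = t ∧ p.2.1 - u ∈ (phi m t).range} := by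
  ext p
  simp only [Set.mem_setOf_eq]
  constructor
  · rintro ⟨g, rfl⟩
    simp only [conj_eq]
    refine ⟨trivial, ?_⟩
    rw [AddMonoidHom.mem_range]
    exact ⟨g.1, by rw [phi_apply]; ring⟩
  · rintro ⟨h1, h2⟩
    rw [AddMonoidHom.mem_range] at h2
    obtain ⟨a, ha⟩ := h2
    obtain ⟨p1, p2, p3⟩ := p
    simp only at h1 ha ⊢
    subst h1
    rw [phi_apply] at ha
    refine ⟨(a, (v + a * u + a * p1 ^ ((3 : ℕ) ^ (m + 1) + 1) + a ^ 2 * p1 ^ (3 : ℕ) ^ (m + 1)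
      + a ^ (3 : ℕ) ^ (m + 1) * p1 ^ 2 - p3) / p1, 0), ?_⟩
    simp only [conj_eq, Prod.mk.injEq]
    refine ⟨trivial, by linear_combination ha, ?_⟩
    field_simp
    ring

/-- The index type classifying conjugacy classes. -/
abbrev Tm (m : ℕ) :=
  K m ⊕ ({u : K m // u ≠ 0} ⊕ Σ t : {t : K m // t ≠ 0}, K m ⧸ (phi m t.1).range)

/-- The class invariant. -/
noncomputable def iota (m : ℕ) (x : K m × K m × K m) : Tm m :=
  if h1 : x.1 = 0 then
    if h2 : x.2.1 = 0 then Sum.inl x.2.2 else Sum.inr (Sum.inl ⟨x.2.1, h2⟩)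
  else Sum.inr (Sum.inr ⟨⟨x.1, h1⟩, QuotientAddGroup.mk x.2.1⟩)

lemma iota0 (m : ℕ) (v : K m) : iota m (0, 0, v) = Sum.inl v := by simp [iota]

lemma iotau (m : ℕ) {u : K m} (hu : u ≠ 0) (v : K m) :
    iota m (0, u, v) = Sum.inr (Sum.inl ⟨u, hu⟩) := by simp [iota, hu]

lemma iotat (m : ℕ) {t : K m} (ht : t ≠ 0) (u v : K m) :
    iota m (t, u, v) = Sum.inr (Sum.inr ⟨⟨t, ht⟩, QuotientAddGroup.mk u⟩) := by
  simp [iota, ht]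

lemma key1 (m : ℕ) (x y : K m × K m × K m) (hy : y ∈ Cl m x) : iota m y = iota m x := by
  obtain ⟨t, u, v⟩ := x
  by_cases ht : t = 0
  · subst ht
    by_cases hu : u = 0
    · subst hu
      rw [cl_central, Set.mem_singleton_iff] at hy
      rw [hy]
    · rw [cl_t0 m hu] at hy
      obtain ⟨h1, h2⟩ := hy
      obtain ⟨y1, y2, y3⟩ := y
      simp only at h1 h2
      subst h1; subst h2
      rw [iotau m hu y3, iotau m hu v]
  · rw [cl_gen m ht] at hy
    obtain ⟨h1, h2⟩ := hy
    obtain ⟨y1, y2, y3⟩ := y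
    simp only at h1 h2
    subst h1
    rw [iotat m ht y2 y3, iotat m ht u v]
    have hq : (QuotientAddGroup.mk y2 : K m ⧸ (phi m y1).range) = QuotientAddGroup.mk u := by
      rw [QuotientAddGroup.eq]
      have h3 : -y2 + u = -(y2 - u) := by ring
      rw [h3]
      exact neg_mem h2
    rw [hq]

lemma key2 (m : ℕ) (x y : K m × K m × K m) (h : iota m x = iota m y) :
    Cl m x = Cl m y := by
  obtain ⟨t, u, v⟩ := x
  obtain ⟨s, w, z⟩ := y
  by_cases h1 : t = 0
  · subst h1
    by_cases h2 : u = 0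
    · subst h2
      rw [iota0] at h
      by_cases h3 : s = 0
      · subst h3
        by_cases h4 : w = 0
        · subst h4
          rw [iota0] at h
          simp only [Sum.inl.injEq] at h
          subst h
          rfl
        · rw [iotau m h4] at h; simp at h
      · rw [iotat m h3] at h; simp at h
    · rw [iotau m h2] at h
      by_cases h3 : s = 0
      · subst h3
        by_cases h4 : w = 0
        · subst h4; rw [iota0] at h; simp at h
        · rw [iotau m h4] at h
          simp only [Sum.inr.injEq, Sum.inl.injEq, Subtype.mk.injEq] at h
          subst h
          rw [cl_t0 m h2, cl_t0 m h2]
      · rw [iotat m h3] at h; simp at h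
  · rw [iotat m h1] at h
    by_cases h3 : s = 0
    · subst h3
      by_cases h4 : w = 0
      · subst h4; rw [iota0] at h; simp at h
      · rw [iotau m h4] at h; simp at h
    · rw [iotat m h3] at h
      have h' := Sum.inr_injective (Sum.inr_injective h)
      obtain ⟨hts, hq⟩ := Sigma.mk.inj_iff.mp h'
      have hts' : t = s := congrArg Subtype.val hts
      subst hts'
      have h5 := eq_of_heq hq
      rw [QuotientAddGroup.eq] at h5
      rw [cl_gen m h1 u v, cl_gen m h1 w z]
      ext p
      simp only [Set.mem_setOf_eq]
      constructor
      · rintro ⟨hp1, hp2⟩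
        refine ⟨hp1, ?_⟩
        have e : p.2.1 - w = (p.2.1 - u) - (-u + w) := by ring
        rw [e]
        exact sub_mem hp2 h5
      · rintro ⟨hp1, hp2⟩
        refine ⟨hp1, ?_⟩
        have e : p.2.1 - u = (p.2.1 - w) + (-u + w) := by ring
        rw [e]
        exact add_mem hp2 h5

lemma iota_surj (m : ℕ) : Function.Surjective (iota m) := by
  rintro (v | ⟨u, hu⟩ | ⟨⟨t, ht⟩, q⟩)
  · exact ⟨(0, 0, v), iota0 m v⟩
  · exact ⟨(0, u, 0), iotau m hu 0⟩
  · obtain ⟨u, rfl⟩ := QuotientAddGroup.mk_surjective q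
    exact ⟨(t, u, 0), iotat m ht u 0⟩

lemma card_ne_zero' (m : ℕ) : Nat.card {u : K m // u ≠ 0} = 3 ^ (2 * m + 1) - 1 := by
  have h1 : Nat.card {u : K m // u ≠ 0} = (({0} : Set (K m))ᶜ).ncard := by
    rw [← Nat.card_coe_set_eq]
    exact Nat.card_congr (Equiv.subtypeEquivRight (by simp))
  have h2 := Set.ncard_add_ncard_compl ({0} : Set (K m)) (Set.toFinite _) (Set.toFinite _)
  rw [Set.ncard_singleton, card_K m] at h2
  omega

lemma card_Tm (m : ℕ) : Nat.card (Tm m) = 5 * 3 ^ (2 * m + 1) - 4 := by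
  have hsig : Nat.card (Σ t : {t : K m // t ≠ 0}, K m ⧸ (phi m t.1).range) =
      (3 ^ (2 * m + 1) - 1) * 3 := by
    have e := Nat.card_congr (Equiv.sigmaEquivProdOfEquiv
      (fun t : {t : K m // t ≠ 0} => Finite.equivFinOfCardEq (card_quot m t.2)))
    rw [e, Nat.card_prod, card_ne_zero' m, Nat.card_eq_fintype_card, Fintype.card_fin]
  rw [Nat.card_sum, Nat.card_sum, hsig, card_K m, card_ne_zero' m]
  have h3 : 3 ≤ 3 ^ (2 * m + 1) := by
    calc (3 : ℕ) = 3 ^ 1 := (pow_one 3).symm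
    _ ≤ 3 ^ (2 * m + 1) := Nat.pow_le_pow_right (by norm_num) (by omega)
  omega

end Stmt13Aux

open Stmt13Aux in
/-- The number of conjugacy classes of `²G₂^syl(3^(2m+1))` is `5q − 4`. -/
theorem stmt_13 (m : ℕ) :
    Nat.card {S : Set (K m × K m × K m) //
        ∃ x : K m × K m × K m,
          S = Set.range fun g : K m × K m × K m =>
            Ymul m (Ymul m g x) (Yinv m g)} = 5 * 3 ^ (2 * m + 1) - 4 := by
  rw [← card_Tm m]
  apply Nat.card_eq_of_bijective (fun S => iota m (Classical.choose S.2))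
  constructor
  · rintro ⟨S₁, hS₁⟩ ⟨S₂, hS₂⟩ hff
    dsimp only at hff
    apply Subtype.ext
    show S₁ = S₂
    rw [Classical.choose_spec hS₁, Classical.choose_spec hS₂]
    exact key2 m _ _ hff
  · intro τ
    obtain ⟨x, hx⟩ := iota_surj m τ
    refine ⟨⟨Cl m x, ⟨x, rfl⟩⟩, ?_⟩
    dsimp only
    set c := Classical.choose (⟨x, rfl⟩ : ∃ y, Cl m x =
        Set.range fun g => Ymul m (Ymul m g y) (Yinv m g)) with hc
    have hcc : Cl m x = Cl m c := by
      rw [hc]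
      exact Classical.choose_spec (⟨x, rfl⟩ : ∃ y, Cl m x =
        Set.range fun g => Ymul m (Ymul m g y) (Yinv m g))
    have hmem : c ∈ Cl m x := by
      rw [hcc]
      exact mem_self m c
    rw [← hx]
    exact key1 m x _ hmem
end

section
/- Let G be a finite group, V a finite abelian group on which G acts on the right by automorphisms (action written A∘g), and f : G → V a 1-cocycle, i.e. f(xg) = f(x)∘g + f(g) for all x,g ∈ G. Let U ≤ G be a subgroup such that f restricted to U is bijective, and let H = {g ∈ G : f(g) = 0}. Then H ∩ U = {1} and G = H·U. -/
/-! From `f x = f (x * y⁻¹) ∘ y + f y` one gets `f x = f y ↔ x * y⁻¹ ∈ H`, so the fibres of `f` are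
the right cosets of `H`. Injectivity of `f` on `U` then forces `H ∩ U = {1}`, and surjectivity
puts an element of `U` in every coset `H g`. -/

section Cocycle

variable {G V : Type*} [Group G] [AddCommGroup V] {ρ : G → V ≃+ V} {f : G → V}

theorem cocycle_eq_iff_mul_inv_eq_zero (hf : ∀ x g : G, f (x * g) = ρ g (f x) + f g) (x y : G) :
    f x = f y ↔ f (x * y⁻¹) = 0 := by
  have hx : f x = ρ y (f (x * y⁻¹)) + f y := by
    simpa only [inv_mul_cancel_right] using hf (x * y⁻¹) y
  rw [hx, add_eq_right, AddEquiv.map_eq_zero_iff]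

theorem cocycle_one_eq_zero (hf : ∀ x g : G, f (x * g) = ρ g (f x) + f g) : f 1 = 0 := by
  simpa using (cocycle_eq_iff_mul_inv_eq_zero hf 1 1).mp rfl

end Cocycle

theorem stmt_14_general {G V : Type*} [Group G] [AddCommGroup V]
    (ρ : G → V ≃+ V)
    (f : G → V) (hf : ∀ x g : G, f (x * g) = ρ g (f x) + f g)
    (U : Subgroup G) (hU : Function.Bijective fun u : U => f u) :
    {g : G | f g = 0} ∩ (U : Set G) = {1} ∧
    ∀ g : G, ∃ h ∈ {g : G | f g = 0}, ∃ u ∈ U, g = h * u := by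
  have hf1 := cocycle_one_eq_zero hf
  refine ⟨Set.eq_singleton_iff_unique_mem.mpr ⟨⟨hf1, U.one_mem⟩, ?_⟩, ?_⟩
  · rintro g ⟨hg, hgU⟩
    exact congrArg Subtype.val (hU.injective (a₁ := ⟨g, hgU⟩) (a₂ := 1) (hg.trans hf1.symm))
  · intro g
    obtain ⟨u, hu⟩ := hU.surjective (f g)
    exact ⟨g * (u : G)⁻¹, (cocycle_eq_iff_mul_inv_eq_zero hf g u).mp hu.symm, u, u.2, by group⟩

/-- Let `G` be a finite group, `V` a finite abelian group with a right `G`-action by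
automorphisms `ρ` (so `ρ (g*h) = ρ g ≫ ρ h`), `f : G → V` a 1-cocycle
(`f (x*g) = (f x) ∘ g + f g`), and `U ≤ G` with `f|_U` bijective. If
`H = {g : f g = 0}`, then `H ∩ U = {1}` and `G = H·U`. -/
theorem stmt_14 {G V : Type*} [Group G] [Finite G] [AddCommGroup V] [Finite V]
    (ρ : G → V ≃+ V) (hρ : ∀ g h : G, ρ (g * h) = (ρ g).trans (ρ h))
    (f : G → V) (hf : ∀ x g : G, f (x * g) = ρ g (f x) + f g)
    (U : Subgroup G) (hU : Function.Bijective fun u : U => f u) :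
    {g : G | f g = 0} ∩ (U : Set G) = {1} ∧
    ∀ g : G, ∃ h ∈ {g : G | f g = 0}, ∃ u ∈ U, g = h * u :=
  stmt_14_general ρ f hf U hU
end

section
/- In the group U = ²G₂^syl(q), every U-orbit of the action A.u on V = F_q³ (coordinates (A₁₂,A₁₃,A₁₄)) given by (A₁₂,A₁₃,A₁₄).Y(t₁,t₃,t₄) = (A₁₂ − A₁₃t₁^(3θ) − A₁₄t₃, A₁₃ − A₁₄t₁, A₁₄) has size 1 if A₁₃ = A₁₄ = 0, size q if A₁₄ = 0 and A₁₃ ≠ 0, and size q² if A₁₄ ≠ 0. -/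
lemma powbij (m : ℕ) : Function.Bijective (fun x : K m => x ^ 3 ^ (m + 1)) := by
  have hinj : Function.Injective (fun x : K m => x ^ 3 ^ (m + 1)) := by
    intro x y h
    simp only at h
    have hz : (x - y) ^ 3 ^ (m + 1) = 0 := by
      rw [sub_pow_char_pow, h, sub_self]
    have := pow_eq_zero_iff (pow_ne_zero (m + 1) (three_ne_zero)) |>.mp hz
    exact sub_eq_zero.mp this
  exact Finite.injective_iff_bijective.mp hinj

lemma cardK (m : ℕ) : Nat.card (K m) = 3 ^ (2 * m + 1) := by
  exact GaloisField.card 3 (2 * m + 1) (by omega)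

/-- Orbit sizes of the action `(A₁₂,A₁₃,A₁₄).Y(t₁,t₃,t₄) =
(A₁₂ − A₁₃t₁^(3θ) − A₁₄t₃, A₁₃ − A₁₄t₁, A₁₄)` of `²G₂^syl(q)` on `V = F_q³`. -/
theorem stmt_19 (m : ℕ) (A : K m × K m × K m) :
    (A.2.1 = 0 ∧ A.2.2 = 0 →
      (Set.range fun u : K m × K m × K m =>
        (A.1 - A.2.1 * u.1 ^ (3 ^ (m + 1)) - A.2.2 * u.2.1,
          A.2.1 - A.2.2 * u.1, A.2.2)).ncard = 1) ∧
    (A.2.2 = 0 ∧ A.2.1 ≠ 0 →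
      (Set.range fun u : K m × K m × K m =>
        (A.1 - A.2.1 * u.1 ^ (3 ^ (m + 1)) - A.2.2 * u.2.1,
          A.2.1 - A.2.2 * u.1, A.2.2)).ncard = 3 ^ (2 * m + 1)) ∧
    (A.2.2 ≠ 0 →
      (Set.range fun u : K m × K m × K m =>
        (A.1 - A.2.1 * u.1 ^ (3 ^ (m + 1)) - A.2.2 * u.2.1,
          A.2.1 - A.2.2 * u.1, A.2.2)).ncard = (3 ^ (2 * m + 1)) ^ 2) := by
  refine ⟨?_, ?_, ?_⟩
  · rintro ⟨h2, h3⟩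
    simp only [h2, h3, zero_mul, sub_zero, Set.range_const, Set.ncard_singleton]
  · rintro ⟨h3, h2⟩
    have hrange : (Set.range fun u : K m × K m × K m =>
        (A.1 - A.2.1 * u.1 ^ (3 ^ (m + 1)) - A.2.2 * u.2.1,
          A.2.1 - A.2.2 * u.1, A.2.2))
        = (fun c : K m => (c, A.2.1, A.2.2)) '' Set.univ := by
      rw [Set.image_univ]
      ext x
      simp only [Set.mem_range]
      constructor
      · rintro ⟨u, rfl⟩
        exact ⟨A.1 - A.2.1 * u.1 ^ 3 ^ (m + 1) - A.2.2 * u.2.1, by simp [h3]⟩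
      · rintro ⟨c, rfl⟩
        obtain ⟨t, ht⟩ := (powbij m).surjective ((A.1 - c) / A.2.1)
        simp only at ht
        refine ⟨(t, 0, 0), ?_⟩
        have h1 : A.1 - A.2.1 * t ^ 3 ^ (m + 1) - A.2.2 * (0 : K m) = c := by
          rw [h3, ht]; field_simp; ring
        have hb : A.2.1 - A.2.2 * t = A.2.1 := by rw [h3]; ring
        exact Prod.ext h1 (Prod.ext hb rfl)
    rw [hrange, Set.ncard_image_of_injective _ (fun a b h => (Prod.mk.injEq _ _ _ _).mp h |>.1),
      Set.ncard_univ, cardK]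
  · intro h3
    have hrange : (Set.range fun u : K m × K m × K m =>
        (A.1 - A.2.1 * u.1 ^ (3 ^ (m + 1)) - A.2.2 * u.2.1,
          A.2.1 - A.2.2 * u.1, A.2.2))
        = (fun c : K m × K m => (c.1, c.2, A.2.2)) '' Set.univ := by
      rw [Set.image_univ]
      ext x
      simp only [Set.mem_range]
      constructor
      · rintro ⟨u, rfl⟩
        exact ⟨(A.1 - A.2.1 * u.1 ^ 3 ^ (m + 1) - A.2.2 * u.2.1, A.2.1 - A.2.2 * u.1), rfl⟩
      · rintro ⟨⟨a, b⟩, rfl⟩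
        refine ⟨((A.2.1 - b) / A.2.2,
          (A.1 - A.2.1 * ((A.2.1 - b) / A.2.2) ^ 3 ^ (m + 1) - a) / A.2.2, 0), ?_⟩
        have h1 : A.1 - A.2.1 * ((A.2.1 - b) / A.2.2) ^ 3 ^ (m + 1) -
            A.2.2 * ((A.1 - A.2.1 * ((A.2.1 - b) / A.2.2) ^ 3 ^ (m + 1) - a) / A.2.2) = a := by
          field_simp
          ring
        have h2 : A.2.1 - A.2.2 * ((A.2.1 - b) / A.2.2) = b := by
          field_simp
          ring
        exact Prod.ext h1 (Prod.ext h2 rfl)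
    rw [hrange, Set.ncard_image_of_injective _
        (fun a b h => by
          simp only [Prod.mk.injEq] at h
          exact Prod.ext h.1 h.2.1),
      Set.ncard_univ, Nat.card_prod, cardK, sq]
end
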